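/- arXiv:2304.05279 — 4 statements merged into one kernel-verified Lean document; each statement's English description precedes it below -/
import Mathlib

section
/- Let G be a restricted graph with source vertex s. Then for every vertex v ∈ V(G), η_G(v) ≤ κ(G), i.e., the minimum number of negative-weight edges in a shortest s-v path is at most the maximum number of negative-weight edges in any simple path starting at s with nonpositive total weight. -/
variable {V : Type*}

/-- `IsWalkFrom E u v l`: the list of vertices `l` is a walk from `u` to `v` in the
directed graph with edge relation `E`: it is nonempty, consecutive vertices are
joined by edges, it starts at `u` and ends at `v`. -/
def IsWalkFrom (E : V → V → Prop) (u v : V) (l : List V) : Prop :=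
  l ≠ [] ∧ l.Chain' E ∧ l.head? = some u ∧ l.getLast? = some v

/-- The total weight of a walk: the sum of the weights of its consecutive edges. -/
def walkWeight (w : V → V → ℤ) (l : List V) : ℤ :=
  ((l.zip l.tail).map fun p => w p.1 p.2).sum

/-- The number of edges of a walk. -/
def numEdges (l : List V) : ℕ := l.length - 1

/-- A closed walk: a walk from some vertex back to itself with at least one edge. -/
def IsClosedWalk (E : V → V → Prop) (l : List V) : Prop :=
  (∃ v, IsWalkFrom E v v l) ∧ 2 ≤ l.length

/-- A cycle: a closed walk in which no vertex repeats except the start/end vertex. -/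
def IsCycle (E : V → V → Prop) (l : List V) : Prop :=
  IsClosedWalk E l ∧ l.tail.Nodup

/-- `l` is a shortest walk (path) from `u` to `v` w.r.t. weights `w`. -/
def IsShortestPath (E : V → V → Prop) (w : V → V → ℤ) (u v : V) (l : List V) : Prop :=
  IsWalkFrom E u v l ∧ ∀ l', IsWalkFrom E u v l' → walkWeight w l ≤ walkWeight w l'

/-- The mean weight of a (closed) walk, as a rational number. -/
def meanWeight (w : V → V → ℤ) (l : List V) : ℚ :=
  (walkWeight w l : ℚ) / (numEdges l : ℚ)

/-- The number of negative-weight edges of a walk. -/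
def negCount (w : V → V → ℤ) (l : List V) : ℕ :=
  ((l.zip l.tail).filter fun p => decide (w p.1 p.2 < 0)).length

/-- A restricted graph: integer weights at least `−1`, every cycle has mean weight
at least `1`, and the source `s` has a weight-`0` edge to every other vertex. -/
def IsRestricted (E : V → V → Prop) (w : V → V → ℤ) (s : V) : Prop :=
  (∀ u v, E u v → -1 ≤ w u v) ∧
  (∀ C : List V, IsCycle E C → (numEdges C : ℤ) ≤ walkWeight w C) ∧
  (∀ v, v ≠ s → E s v ∧ w s v = 0)

section Aux

variable {w : V → V → ℤ} {E : V → V → Prop}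

lemma walkWeight_nil (w : V → V → ℤ) : walkWeight w ([] : List V) = 0 := rfl

lemma walkWeight_single (w : V → V → ℤ) (x : V) : walkWeight w [x] = 0 := rfl

lemma walkWeight_cons_cons (w : V → V → ℤ) (x y : V) (l : List V) :
    walkWeight w (x :: y :: l) = w x y + walkWeight w (y :: l) := by
  simp [walkWeight]

lemma walkWeight_append (w : V → V → ℤ) :
    ∀ (A : List V) (y : V) (B : List V),
      walkWeight w (A ++ y :: B) = walkWeight w (A ++ [y]) + walkWeight w (y :: B)
  | [], y, B => by simp [walkWeight_single]
  | [a], y, B => by simp [walkWeight_cons_cons, walkWeight_single]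
  | a :: b :: A, y, B => by
    have ih := walkWeight_append w (b :: A) y B
    simp only [List.cons_append] at ih ⊢
    rw [walkWeight_cons_cons, walkWeight_cons_cons, ih, add_assoc]

lemma walkWeight_splice (w : V → V → ℤ) (A : List V) (y : V) (B C : List V) :
    walkWeight w (A ++ y :: B ++ y :: C) =
      walkWeight w (A ++ y :: C) + walkWeight w (y :: B ++ [y]) := by
  have h1 : walkWeight w (A ++ y :: (B ++ y :: C)) =
      walkWeight w (A ++ [y]) + walkWeight w (y :: (B ++ y :: C)) :=
    walkWeight_append w A y (B ++ y :: C)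
  have h2 : walkWeight w ((y :: B) ++ y :: C) =
      walkWeight w ((y :: B) ++ [y]) + walkWeight w (y :: C) :=
    walkWeight_append w (y :: B) y C
  have h3 : walkWeight w (A ++ y :: C) =
      walkWeight w (A ++ [y]) + walkWeight w (y :: C) :=
    walkWeight_append w A y C
  simp only [List.cons_append, List.append_assoc] at *
  omega

lemma chain'_splice {A : List V} {y : V} {B C : List V}
    (h : List.Chain' E (A ++ y :: B ++ y :: C)) :
    List.Chain' E (A ++ y :: C) ∧ List.Chain' E (y :: B ++ [y]) := by
  have h' : List.Chain' E (A ++ ((y :: B) ++ (y :: C))) := by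
    simpa [List.append_assoc] using h
  obtain ⟨hA, hrest, hlink⟩ := List.isChain_append.mp h'
  obtain ⟨hyB, hyC, hlink2⟩ := List.isChain_append.mp hrest
  constructor
  · refine List.isChain_append.mpr ⟨hA, hyC, ?_⟩
    intro a ha b hb
    simp only [List.head?_cons, Option.mem_def, Option.some.injEq] at hb
    subst hb
    exact hlink a ha y (by simp)
  · refine List.isChain_append.mpr ⟨hyB, List.isChain_singleton y, ?_⟩
    intro a ha b hb
    simp only [List.head?_cons, Option.mem_def, Option.some.injEq] at hb
    subst hb
    exact hlink2 a ha y (by simp)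

lemma exists_dup {l : List V} (h : ¬ l.Nodup) :
    ∃ (A : List V) (y : V) (B C : List V), l = A ++ y :: B ++ y :: C := by
  induction l with
  | nil => simp at h
  | cons a t ih =>
    rw [List.nodup_cons] at h
    by_cases ha : a ∈ t
    · obtain ⟨B, C, rfl⟩ := List.append_of_mem ha
      exact ⟨[], a, B, C, rfl⟩
    · have ht : ¬ t.Nodup := fun hn => h ⟨ha, hn⟩
      obtain ⟨A, y, B, C, rfl⟩ := ih ht
      exact ⟨a :: A, y, B, C, rfl⟩

lemma closed_nonneg (hcyc : ∀ C : List V, IsCycle E C → (numEdges C : ℤ) ≤ walkWeight w C) :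
    ∀ (n : ℕ) (l : List V) (x : V), l.length ≤ n → List.Chain' E l →
      l.head? = some x → l.getLast? = some x → 2 ≤ l.length → 0 ≤ walkWeight w l := by
  intro n
  induction n with
  | zero => intro l x hl _ _ _ h2; omega
  | succ n ih =>
    intro l x hl hch hh hlast h2
    by_cases hnd : l.tail.Nodup
    · have hne : l ≠ [] := by intro h; subst h; simp at h2
      have hc : IsCycle E l := ⟨⟨⟨x, hne, hch, hh, hlast⟩, h2⟩, hnd⟩
      have h1 := hcyc l hc
      have h3 : 1 ≤ numEdges l := by unfold numEdges; omega
      have : (1 : ℤ) ≤ (numEdges l : ℤ) := by exact_mod_cast h3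
      linarith
    · obtain ⟨A, y, B, C, htl⟩ := exists_dup hnd
      have hlx : l = x :: l.tail := by
        cases l with
        | nil => simp at hh
        | cons a t => simp only [List.head?_cons, Option.some.injEq] at hh; rw [hh]; rfl
      rw [hlx, htl] at hch hlast hl h2 ⊢
      have hch' : List.Chain' E ((x :: A) ++ y :: B ++ y :: C) := hch
      obtain ⟨hch1, hch2⟩ := chain'_splice hch'
      have hW := walkWeight_splice w (x :: A) y B C
      have hlast1 : ((x :: A) ++ y :: C).getLast? = some x := by
        rw [List.getLast?_append_cons]
        have : ((x :: A) ++ y :: B ++ y :: C).getLast? = (y :: C).getLast? := by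
          rw [show (x :: A) ++ y :: B ++ y :: C = ((x :: A) ++ (y :: B)) ++ y :: C by
            simp [List.append_assoc], List.getLast?_append_cons]
        rw [← this]; exact hlast
      have h1 : 0 ≤ walkWeight w ((x :: A) ++ y :: C) := by
        refine ih ((x :: A) ++ y :: C) x ?_ hch1 (by simp) hlast1 ?_ <;>
          simp only [List.length_append, List.length_cons] at hl ⊢ <;> omega
      have h2' : 0 ≤ walkWeight w (y :: B ++ [y]) := by
        refine ih (y :: B ++ [y]) y ?_ hch2 (by simp) ?_ ?_
        · simp only [List.cons_append, List.length_cons, List.length_append,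
            List.length_singleton, List.length_nil] at hl ⊢
          omega
        · rw [show y :: B ++ [y] = (y :: B) ++ y :: [] by simp, List.getLast?_append_cons]
          rfl
        · simp only [List.cons_append, List.length_cons, List.length_append,
            List.length_singleton]; omega
      have : walkWeight w ((x :: A) ++ y :: B ++ y :: C) =
          walkWeight w ((x :: A) ++ y :: C) + walkWeight w (y :: B ++ [y]) := hW
      simp only [List.cons_append] at this h1 h2' ⊢
      omega

lemma shorten (hcyc : ∀ C : List V, IsCycle E C → (numEdges C : ℤ) ≤ walkWeight w C) :
    ∀ (n : ℕ) (l : List V), l.length ≤ n → l ≠ [] → List.Chain' E l →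
      ∃ l', l' ≠ [] ∧ List.Chain' E l' ∧ l'.head? = l.head? ∧
        l'.getLast? = l.getLast? ∧ l'.Nodup ∧ walkWeight w l' ≤ walkWeight w l := by
  intro n
  induction n with
  | zero =>
    intro l hl hne _
    cases l with
    | nil => exact absurd rfl hne
    | cons a t => simp at hl
  | succ n ih =>
    intro l hl hne hch
    by_cases hnd : l.Nodup
    · exact ⟨l, hne, hch, rfl, rfl, hnd, le_refl _⟩
    · obtain ⟨A, y, B, C, rfl⟩ := exists_dup hnd
      obtain ⟨hch1, hch2⟩ := chain'_splice hch
      have hW := walkWeight_splice w A y B C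
      have hclosed : 0 ≤ walkWeight w (y :: B ++ [y]) := by
        refine closed_nonneg hcyc (B.length + 2) (y :: B ++ [y]) y ?_ hch2 (by simp) ?_ ?_
        · simp
        · rw [show y :: B ++ [y] = (y :: B) ++ y :: [] by simp, List.getLast?_append_cons]
          rfl
        · simp only [List.cons_append, List.length_cons, List.length_append,
            List.length_singleton]; omega
      have hlen : (A ++ y :: C).length ≤ n := by
        simp only [List.length_append, List.length_cons] at hl ⊢; omega
      have hne1 : A ++ y :: C ≠ [] := by simp
      obtain ⟨l', h1, h2, h3, h4, h5, h6⟩ := ih (A ++ y :: C) hlen hne1 hch1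
      refine ⟨l', h1, h2, ?_, ?_, h5, ?_⟩
      · rw [h3]; cases A <;> simp
      · rw [h4, List.getLast?_append_cons,
          show A ++ y :: B ++ y :: C = (A ++ (y :: B)) ++ y :: C by simp [List.append_assoc],
          List.getLast?_append_cons]
      · omega

end Aux

/-- **`η_G(v) ≤ κ(G)` in restricted graphs.** Let `G` be restricted with source `s`, and
let `κ` be the maximum number of negative-weight edges over all simple paths starting
at `s` of nonpositive total weight. Then for every vertex `v` there is a least value
`η` of the number of negative-weight edges over shortest `s`-`v` paths, and `η ≤ κ`. -/
theorem eta_le_kappa {V : Type*} [Fintype V]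
    (E : V → V → Prop) (w : V → V → ℤ) (s : V)
    (hres : IsRestricted E w s)
    (κ : ℕ)
    (hκ : IsGreatest {k : ℕ | ∃ P : List V, P ≠ [] ∧ P.Chain' E ∧ P.head? = some s ∧
            P.Nodup ∧ walkWeight w P ≤ 0 ∧ negCount w P = k} κ) :
    ∀ v, ∃ η : ℕ,
      IsLeast {k : ℕ | ∃ P, IsShortestPath E w s v P ∧ negCount w P = k} η ∧ η ≤ κ := by
  obtain ⟨hw1, hcyc, hsrc⟩ := hres
  intro v
  -- a base walk of weight 0 from s to v
  have hbase : ∃ b : List V, IsWalkFrom E s v b ∧ walkWeight w b = 0 ∧ b.Nodup := by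
    by_cases hv : v = s
    · subst hv
      exact ⟨[v], ⟨by simp, List.isChain_singleton v, rfl, rfl⟩, rfl, by simp⟩
    · obtain ⟨he, hwe⟩ := hsrc v hv
      refine ⟨[s, v], ⟨by simp, ?_, rfl, rfl⟩, ?_, by simp [Ne.symm hv]⟩
      · exact List.isChain_pair.mpr he
      · rw [walkWeight_cons_cons, walkWeight_single, hwe]; norm_num
  obtain ⟨b, hbwalk, hbw, hbnd⟩ := hbase
  -- the set of simple walks from s to v, and a minimum-weight element
  set S : Set (List V) := {l | IsWalkFrom E s v l ∧ l.Nodup} with hS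
  have hfin : S.Finite := by
    refine Set.Finite.subset (List.finite_length_le V (Fintype.card V)) ?_
    intro l hl
    exact hl.2.length_le_card
  obtain ⟨P₀, hP₀S, hP₀min⟩ := Set.exists_min_image S (walkWeight w) hfin ⟨b, hbwalk, hbnd⟩
  have hshort : IsShortestPath E w s v P₀ := by
    refine ⟨hP₀S.1, fun l' hl' => ?_⟩
    obtain ⟨l'', h1, h2, h3, h4, h5, h6⟩ :=
      shorten hcyc l'.length l' le_rfl hl'.1 hl'.2.1
    have : l'' ∈ S := ⟨⟨h1, h2, h3.trans hl'.2.2.1, h4.trans hl'.2.2.2⟩, h5⟩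
    exact le_trans (hP₀min l'' this) h6
  have hw0 : walkWeight w P₀ ≤ 0 := hbw ▸ hshort.2 b hbwalk
  have hκmem : negCount w P₀ ≤ κ :=
    hκ.2 ⟨P₀, hP₀S.1.1, hP₀S.1.2.1, hP₀S.1.2.2.1, hP₀S.2, hw0, rfl⟩
  have hTne : (negCount w P₀) ∈ {k : ℕ | ∃ P, IsShortestPath E w s v P ∧ negCount w P = k} :=
    ⟨P₀, hshort, rfl⟩
  refine ⟨sInf {k : ℕ | ∃ P, IsShortestPath E w s v P ∧ negCount w P = k},
    ⟨Nat.sInf_mem ⟨_, hTne⟩, fun k hk => Nat.sInf_le hk⟩,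
    le_trans (Nat.sInf_le hTne) hκmem⟩
end

section
/- Let G be a finite directed graph with integer edge weights, let W ≥ 1 be an integer, and suppose every edge weight of G is greater than −3W. Let H be the copy of G with edge weights w_H(e) = ⌈w_G(e)/W⌉ + 1. Then (a) every edge of H has weight w_H(e) ≥ −1, and (b) if G contains no negative cycle, then every cycle C in H has mean weight w̄_H(C) = w_H(C)/|C| ≥ 1. -/
variable {V : Type*}

private lemma key_sum {V : Type*} (w : V → V → ℤ) (W : ℤ) (hW : (0:ℚ) < W)
    (L : List (V × V)) :
    ((L.map fun p => w p.1 p.2).sum : ℚ) / (W : ℚ) + L.length ≤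
    (((L.map fun p => ⌈(w p.1 p.2 : ℚ) / (W : ℚ)⌉ + 1).sum : ℤ) : ℚ) := by
  induction L with
  | nil => simp
  | cons a L ih =>
    have h1 : (w a.1 a.2 : ℚ) / (W : ℚ) ≤ (⌈(w a.1 a.2 : ℚ) / (W : ℚ)⌉ : ℚ) :=
      Int.le_ceil _
    simp only [List.map_cons, List.sum_cons, List.length_cons]
    push_cast
    rw [add_div]
    push_cast at ih
    linarith

/-- **One-step scaling produces a restricted graph.** Suppose `W ≥ 1` and every edge
weight of `G` is greater than `−3W`, and let `H` have weights `w_H(e) = ⌈w_G(e)/W⌉ + 1`.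
Then (a) every edge of `H` has weight at least `−1`, and (b) if `G` has no negative
cycle, then every cycle of `H` has mean weight at least `1`. -/
theorem scale_gives_restricted {V : Type*} [Fintype V]
    (E : V → V → Prop) (w : V → V → ℤ) (W : ℤ) (hW : 1 ≤ W)
    (hlb : ∀ u v, E u v → -3 * W < w u v) :
    (∀ u v, E u v → -1 ≤ ⌈(w u v : ℚ) / (W : ℚ)⌉ + 1) ∧
    ((¬ ∃ C, IsCycle E C ∧ walkWeight w C < 0) →
      ∀ C : List V, IsCycle E C →
        1 ≤ meanWeight (fun u v => ⌈(w u v : ℚ) / (W : ℚ)⌉ + 1) C) := by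
  have hWQ : (0:ℚ) < (W:ℚ) := by exact_mod_cast lt_of_lt_of_le one_pos hW
  constructor
  · intro u v huv
    have h := hlb u v huv
    have h3 : (-3 : ℚ) < (w u v : ℚ) / (W : ℚ) := by
      rw [lt_div_iff₀ hWQ]
      exact_mod_cast h
    have : (-3 : ℤ) < ⌈(w u v : ℚ) / (W : ℚ)⌉ :=
      Int.lt_ceil.mpr (by exact_mod_cast h3)
    linarith
  · intro hnoneg C hC
    have hlen := hC.1.2
    have hpos : walkWeight w C ≥ 0 := by
      by_contra hc
      exact hnoneg ⟨C, hC, by linarith⟩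
    have hL : (C.zip C.tail).length = numEdges C := by
      simp [numEdges, List.length_zip, List.length_tail]
    have hne : 1 ≤ numEdges C := by
      simp [numEdges]; omega
    have hkey := key_sum w W hWQ (C.zip C.tail)
    rw [hL] at hkey
    have hsum : ((walkWeight w C : ℤ) : ℚ) / (W:ℚ) ≥ 0 :=
      div_nonneg (by exact_mod_cast hpos) (le_of_lt hWQ)
    unfold meanWeight
    rw [le_div_iff₀ (by exact_mod_cast hne : (0:ℚ) < (numEdges C : ℚ))]
    unfold walkWeight
    unfold walkWeight at hsum
    push_cast at hkey hsum ⊢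
    linarith
end

section
/- Let G be a finite directed graph with integer edge weights and a source vertex s. For i ≥ 0 and a vertex v define dist_i(v) as the minimum weight of an s-v path containing fewer than i negative-weight edges (∞ if no such path exists), and dist'_i(v) = min{ dist_i(v), min over vertices u with w(u,v) < 0 of dist_i(u) + w(u,v) }. Then for every i ≥ 0 and every vertex v: dist_i(v) ≥ dist'_i(v) ≥ dist_{i+1}(v). -/
variable {V : Type*}

/-- `d` is the minimum of the set `S` of integers, viewed in `WithTop ℤ`:
`d = ⊤` iff `S` is empty, otherwise `d` is the least element of `S`. -/
def IsMinOver (S : Set ℤ) (d : WithTop ℤ) : Prop :=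
  (∀ x ∈ S, d ≤ (x : WithTop ℤ)) ∧ (d = ⊤ ∨ ∃ x ∈ S, d = (x : WithTop ℤ))


lemma zip_tail_append_singleton (l : List V) (u v : V) (h : l.getLast? = some u) :
    (l ++ [v]).zip (l ++ [v]).tail = l.zip l.tail ++ [(u, v)] := by
  induction l with
  | nil => simp at h
  | cons a t ih =>
    cases t with
    | nil => simp_all
    | cons b t' =>
      have h' : (b :: t').getLast? = some u := by
        rwa [List.getLast?_cons_cons] at h
      simp only [List.cons_append, List.zip_cons_cons, List.tail_cons] at *
      rw [ih h']

lemma walk_extend {E : V → V → Prop} {w : V → V → ℤ} {s u v : V} {P : List V}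
    (hW : IsWalkFrom E s u P) (hE : E u v) :
    IsWalkFrom E s v (P ++ [v]) ∧
    walkWeight w (P ++ [v]) = walkWeight w P + w u v ∧
    negCount w (P ++ [v]) ≤ negCount w P + 1 := by
  obtain ⟨hne, hch, hh, hl⟩ := hW
  have hz := zip_tail_append_singleton P u v hl
  refine ⟨⟨by simp, ?_, ?_, by simp⟩, ?_, ?_⟩
  · show List.IsChain E (P ++ [v]); rw [List.isChain_append]
    exact ⟨hch, List.isChain_singleton _, by simp [hl]; exact hE⟩
  · rw [List.head?_append_of_ne_nil _ hne]; exact hh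
  · simp [walkWeight, hz]
  · simp only [negCount, hz, List.filter_append, List.length_append]
    have : (List.filter (fun p => decide (w p.1 p.2 < 0)) [(u, v)]).length ≤ 1 := by
      simp [List.filter]; split <;> simp
    omega

open Classical in
/-- **Monotonicity of the lazy-Dijkstra distances.** Let `D i v = dist_i(v)` be the
minimum weight of an `s`-`v` walk with fewer than `i` negative-weight edges (`⊤` if
none exists), and let `D' i v = dist'_i(v) = min{dist_i(v), min_{w(u,v)<0} dist_i(u)
+ w(u,v)}`. Then for all `i` and `v`: `dist_i(v) ≥ dist'_i(v) ≥ dist_{i+1}(v)`. -/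
theorem dist_i_sandwich {V : Type*} [Fintype V]
    (E : V → V → Prop) (w : V → V → ℤ) (s : V)
    (D : ℕ → V → WithTop ℤ)
    (hD : ∀ i v, IsMinOver
      {x : ℤ | ∃ P, IsWalkFrom E s v P ∧ negCount w P < i ∧ walkWeight w P = x} (D i v))
    (D' : ℕ → V → WithTop ℤ)
    (hD' : ∀ i v, D' i v = min (D i v)
      (Finset.univ.inf fun u =>
        if E u v ∧ w u v < 0 then D i u + ((w u v : ℤ) : WithTop ℤ) else ⊤)) :
    ∀ (i : ℕ) (v : V), D (i + 1) v ≤ D' i v ∧ D' i v ≤ D i v := by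
  intro i v
  refine ⟨?_, by rw [hD' i v]; exact min_le_left _ _⟩
  rw [hD' i v]
  apply le_min
  · rcases (hD i v).2 with h | ⟨x, ⟨P, hW, hn, hx⟩, hDx⟩
    · rw [h]; exact le_top
    · rw [hDx]
      exact (hD (i+1) v).1 x ⟨P, hW, Nat.lt_succ_of_lt hn, hx⟩
  · apply Finset.le_inf
    intro u _
    split_ifs with hcond
    · obtain ⟨hE, hwuv⟩ := hcond
      rcases (hD i u).2 with h | ⟨x, ⟨P, hW, hn, hx⟩, hDx⟩
      · rw [h]; simp
      · rw [hDx]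
        obtain ⟨hW', hwt, hnc⟩ := walk_extend (w := w) hW hE
        have : D (i+1) v ≤ ((x + w u v : ℤ) : WithTop ℤ) :=
          (hD (i+1) v).1 _ ⟨P ++ [v], hW', by omega, by rw [hwt, hx]⟩
        simpa using this
    · exact le_top
end

section
/- Let G be a finite directed graph with integer edge weights and a source vertex s. For i ≥ 1 and a vertex v define dist_i(v) as the minimum weight of an s-v path containing fewer than i negative-weight edges (∞ if no such path exists), and dist'_i(v) = min{ dist_i(v), min over vertices u with w(u,v) < 0 of dist_i(u) + w(u,v) }. Then for every i ≥ 1 and every vertex v: dist'_i(v) = min{ dist_i(v), min over vertices u with dist_{i−1}(u) > dist_i(u) and w(u,v) < 0 of dist_i(u) + w(u,v) }. -/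
variable {V : Type*}

lemma zip_tail_append (u v : V) : ∀ (l : List V), l.getLast? = some u →
    (l ++ [v]).zip (l ++ [v]).tail = l.zip l.tail ++ [(u, v)]
  | [], h => by simp at h
  | [a], h => by simp_all
  | a :: b :: t, h => by
    have ih := zip_tail_append u v (b :: t) (by simpa using h)
    simp only [List.cons_append, List.zip_cons_cons, List.tail_cons] at *
    rw [ih]

lemma walkWeight_append_s16 (w : V → V → ℤ) (u v : V) (l : List V) (h : l.getLast? = some u) :
    walkWeight w (l ++ [v]) = walkWeight w l + w u v := by
  unfold walkWeight
  rw [zip_tail_append u v l h]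
  simp

lemma negCount_append (w : V → V → ℤ) (u v : V) (l : List V) (h : l.getLast? = some u) :
    negCount w (l ++ [v]) ≤ negCount w l + 1 := by
  unfold negCount
  rw [zip_tail_append u v l h, List.filter_append, List.length_append]
  have : (List.filter (fun p => decide (w p.1 p.2 < 0)) [(u, v)]).length ≤ 1 := by
    simp [List.filter]; split <;> simp
  omega

lemma walkFrom_append (E : V → V → Prop) (s u v : V) (l : List V)
    (h : IsWalkFrom E s u l) (he : E u v) : IsWalkFrom E s v (l ++ [v]) := by
  obtain ⟨hne, hch, hh, hl⟩ := h
  refine ⟨by simp, ?_, ?_, by simp⟩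
  · show List.IsChain E (l ++ [v])
    rw [List.isChain_append]
    refine ⟨hch, List.isChain_singleton v, fun x hx y hy => ?_⟩
    rw [hl] at hx
    simp at hx hy
    subst hx; subst hy; exact he
  · cases l with
    | nil => simp at hne
    | cons a t => simpa using hh


open Classical in
/-- **Recurrence for `dist'_i`.** With `D i v = dist_i(v)` (minimum weight of an
`s`-`v` walk with fewer than `i` negative edges) and
`D' i v = dist'_i(v) = min{dist_i(v), min_{w(u,v)<0} dist_i(u) + w(u,v)}`,
we have for all `i ≥ 1` and all `v`:
`dist'_i(v) = min{ dist_i(v), min_{u : dist_{i−1}(u) > dist_i(u), w(u,v)<0} dist_i(u) + w(u,v) }`. -/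
theorem dist'_recurrence {V : Type*} [Fintype V]
    (E : V → V → Prop) (w : V → V → ℤ) (s : V)
    (D : ℕ → V → WithTop ℤ)
    (hD : ∀ i v, IsMinOver
      {x : ℤ | ∃ P, IsWalkFrom E s v P ∧ negCount w P < i ∧ walkWeight w P = x} (D i v))
    (D' : ℕ → V → WithTop ℤ)
    (hD' : ∀ i v, D' i v = min (D i v)
      (Finset.univ.inf fun u =>
        if E u v ∧ w u v < 0 then D i u + ((w u v : ℤ) : WithTop ℤ) else ⊤)) :
    ∀ i : ℕ, 1 ≤ i → ∀ v : V, D' i v = min (D i v)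
      (Finset.univ.inf fun u =>
        if D i u < D (i - 1) u ∧ E u v ∧ w u v < 0
          then D i u + ((w u v : ℤ) : WithTop ℤ) else ⊤) := by
  intro i hi v
  rw [hD' i v]
  apply le_antisymm
  · apply min_le_min le_rfl
    apply Finset.inf_mono_fun
    intro u _
    by_cases h1 : D i u < D (i - 1) u ∧ E u v ∧ w u v < 0
    · rw [if_pos h1, if_pos h1.2]
    · rw [if_neg h1]; exact le_top
  · refine le_min (min_le_left _ _) (Finset.le_inf fun u _ => ?_)
    by_cases hc : E u v ∧ w u v < 0
    · by_cases hlt : D i u < D (i - 1) u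
      · refine le_trans (min_le_right _ _) ?_
        refine le_trans (Finset.inf_le (Finset.mem_univ u)) ?_
        rw [if_pos ⟨hlt, hc⟩, if_pos hc]
      · rw [if_pos hc]
        have hle : D (i - 1) u ≤ D i u := le_of_not_gt hlt
        have key : D i v ≤ D (i - 1) u + ((w u v : ℤ) : WithTop ℤ) := by
          rcases (hD (i - 1) u).2 with htop | ⟨x, ⟨P, hP, hn, hw⟩, hx⟩
          · rw [htop]; simp
          · have hwalk : IsWalkFrom E s v (P ++ [v]) := walkFrom_append E s u v P hP hc.1
            have hneg : negCount w (P ++ [v]) < i := by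
              have := negCount_append w u v P hP.2.2.2
              omega
            have hww : walkWeight w (P ++ [v]) = x + w u v := by
              rw [walkWeight_append_s16 w u v P hP.2.2.2, hw]
            have := (hD i v).1 (x + w u v) ⟨P ++ [v], hwalk, hneg, hww⟩
            rw [hx]
            calc D i v ≤ ((x + w u v : ℤ) : WithTop ℤ) := this
              _ = (x : WithTop ℤ) + ((w u v : ℤ) : WithTop ℤ) := by push_cast; ring_nf
        exact le_trans (min_le_left _ _)
          (le_trans key (add_le_add_left hle _))
    · rw [if_neg hc]; exact le_top
end
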